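/- If Y_ω solves Aᵀ Y_ω + Y_ω A + F_ω* Cᵀ C + Cᵀ C F_ω = 0, then trace(Bᵀ Y_ω B) = trace((1/2π) ∫_{-ω}^{ω} G₁*(jν) G₁(jν) dν), where G₁(s) = C(sI - A)^{-1} B. -/

import Mathlib

open Matrix

/-- The resolvent `(jνI - A)⁻¹`. -/
noncomputable def resolvMat {n : ℕ} (A : Matrix (Fin n) (Fin n) ℂ) (ν : ℝ) :
    Matrix (Fin n) (Fin n) ℂ :=
  ((Complex.I * (ν : ℂ)) • (1 : Matrix (Fin n) (Fin n) ℂ) - A)⁻¹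

/-- `F_ω = (1/2π) ∫_{-ω}^{ω} (jνI - A)⁻¹ dν` (entrywise integral). -/
noncomputable def Ffl {n : ℕ} (A : Matrix (Fin n) (Fin n) ℂ) (ω : ℝ) :
    Matrix (Fin n) (Fin n) ℂ :=
  Matrix.of fun i j => (1 / (2 * (Real.pi : ℂ))) * ∫ ν in (-ω)..ω, resolvMat A ν i j

/-!
Both `Y_ω` and the Gramian `(1/2π) ∫_{-ω}^{ω} R(jν)ᴴ CᵀC R(jν) dν`, with `R(s) = (sI - A)⁻¹`,
solve the same Lyapunov equation: on the imaginary axis the resolvent identities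
`R A = jν R - I` and `Aᵀ Rᴴ = -jν Rᴴ - I` give `Aᵀ (Rᴴ Q R) + (Rᴴ Q R) A + Rᴴ Q + Q R = 0`
pointwise, and integrating produces the equation with `F_ω`. As `A` is Hurwitz, `Aᵀ` and `-A`
have disjoint spectra, so `X ↦ Aᵀ X + X A` is injective and `Y_ω` is that Gramian; conjugating
it by `B` gives `(1/2π) ∫ G₁ᴴ G₁` entrywise.
-/

open MeasureTheory Polynomial

section Spectrum

variable {K ι : Type*} [Field K] [Fintype ι] [DecidableEq ι]

lemma Matrix.spectrum_transpose (M : Matrix ι ι K) : spectrum K Mᵀ = spectrum K M := by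
  ext μ
  rw [mem_spectrum_iff_isRoot_charpoly, mem_spectrum_iff_isRoot_charpoly, charpoly_transpose]

/-- Uniqueness half of Sylvester's theorem: `T * D = D * U` forces `q(T) * D = D * q(U)` for
every polynomial `q`, and `q = charpoly U` kills the right side while `q(T)` is invertible. -/
lemma Matrix.eq_zero_of_mul_eq_mul_of_disjoint_spectrum [IsAlgClosed K] {T U D : Matrix ι ι K}
    (hTU : Disjoint (spectrum K T) (spectrum K U)) (h : T * D = D * U) : D = 0 := by
  have hpow (j : ℕ) : T ^ j * D = D * U ^ j := by
    induction j with
    | zero => simp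
    | succ j ih => rw [pow_succ, pow_succ, mul_assoc, h, ← mul_assoc, ih, mul_assoc]
  have haeval (q : K[X]) : aeval T q * D = D * aeval U q := by
    induction q using Polynomial.induction_on' with
    | add p q hp hq => simp only [map_add, add_mul, mul_add, hp, hq]
    | monomial j c =>
      simp only [aeval_monomial, Algebra.algebraMap_eq_smul_one, smul_mul_assoc, one_mul,
        mul_smul_comm, hpow j]
  have hunit : IsUnit (aeval T U.charpoly) := by
    by_contra hn
    rw [(IsAlgClosed.splits U.charpoly).eq_prod_roots_of_monic U.charpoly_monic] at hn
    obtain ⟨r, hrT, hrU⟩ := spectrum.exists_mem_of_not_isUnit_aeval_prod hn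
    exact hTU.notMem_of_mem_left hrT (mem_spectrum_of_isRoot_charpoly hrU)
  rw [← hunit.mul_right_eq_zero, haeval, aeval_self_charpoly, mul_zero]

end Spectrum

lemma Matrix.lyapunov_solution_unique {ι : Type*} [Fintype ι] [DecidableEq ι]
    {A Y₁ Y₂ E : Matrix ι ι ℂ} (hA : ∀ μ ∈ spectrum ℂ A, μ.re < 0)
    (h₁ : Aᵀ * Y₁ + Y₁ * A + E = 0) (h₂ : Aᵀ * Y₂ + Y₂ * A + E = 0) : Y₁ = Y₂ := by
  have hdisj : Disjoint (spectrum ℂ Aᵀ) (spectrum ℂ (-A)) := by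
    rw [spectrum_transpose, ← spectrum.neg_eq, Set.disjoint_left]
    intro μ hμ hμ'
    have := hA _ (Set.mem_neg.mp hμ')
    rw [Complex.neg_re] at this
    linarith [hA μ hμ]
  rw [← sub_eq_zero]
  refine eq_zero_of_mul_eq_mul_of_disjoint_spectrum hdisj ?_
  rw [mul_neg, eq_neg_iff_add_eq_zero, ← sub_eq_zero.mpr (h₁.trans h₂.symm)]
  noncomm_ring

lemma Matrix.conjTranspose_map_ofReal {m n : Type*} (M : Matrix m n ℝ) :
    (M.map Complex.ofReal)ᴴ = (M.map Complex.ofReal)ᵀ := by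
  ext i j
  simp [conjTranspose_apply]

section EntrywiseIntegral

variable {𝕜 l m n o : Type*} [RCLike 𝕜] {a b : ℝ}

noncomputable def entrywiseIntegral (f : ℝ → Matrix m n 𝕜) (a b : ℝ) : Matrix m n 𝕜 :=
  Matrix.of fun i j => ∫ ν in a..b, f ν i j

lemma Continuous.intervalIntegrable_entry {f : ℝ → Matrix m n 𝕜} (hf : Continuous f)
    (a b : ℝ) (i : m) (j : n) : IntervalIntegrable (fun ν => f ν i j) volume a b :=
  (hf.matrix_elem i j).intervalIntegrable a b

lemma mul_entrywiseIntegral [Fintype m] (L : Matrix l m 𝕜) {f : ℝ → Matrix m n 𝕜}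
    (hf : ∀ i j, IntervalIntegrable (fun ν => f ν i j) volume a b) :
    L * entrywiseIntegral f a b = entrywiseIntegral (fun ν => L * f ν) a b := by
  ext i j
  simp only [entrywiseIntegral, Matrix.mul_apply, Matrix.of_apply]
  rw [intervalIntegral.integral_finsetSum fun k _ => (hf k j).const_mul _]
  simp only [intervalIntegral.integral_const_mul]

lemma entrywiseIntegral_mul [Fintype n] (K : Matrix n o 𝕜) {f : ℝ → Matrix m n 𝕜}
    (hf : ∀ i j, IntervalIntegrable (fun ν => f ν i j) volume a b) :
    entrywiseIntegral f a b * K = entrywiseIntegral (fun ν => f ν * K) a b := by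
  ext i j
  simp only [entrywiseIntegral, Matrix.mul_apply, Matrix.of_apply]
  rw [intervalIntegral.integral_finsetSum fun k _ => (hf i k).mul_const _]
  simp only [intervalIntegral.integral_mul_const]

lemma entrywiseIntegral_add {f g : ℝ → Matrix m n 𝕜}
    (hf : ∀ i j, IntervalIntegrable (fun ν => f ν i j) volume a b)
    (hg : ∀ i j, IntervalIntegrable (fun ν => g ν i j) volume a b) :
    entrywiseIntegral f a b + entrywiseIntegral g a b
      = entrywiseIntegral (fun ν => f ν + g ν) a b := by
  ext i j
  simp only [entrywiseIntegral, Matrix.add_apply, Matrix.of_apply,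
    intervalIntegral.integral_add (hf i j) (hg i j)]

lemma conjTranspose_entrywiseIntegral (f : ℝ → Matrix m n 𝕜) :
    (entrywiseIntegral f a b)ᴴ = entrywiseIntegral (fun ν => (f ν)ᴴ) a b := by
  ext i j
  simp [entrywiseIntegral, Matrix.conjTranspose_apply, intervalIntegral.intervalIntegral_conj]

end EntrywiseIntegral

section Resolvent

variable {n : ℕ} {A : Matrix (Fin n) (Fin n) ℂ}

lemma isUnit_det_sub_of_notMem_spectrum {ν : ℝ} (hν : Complex.I * ν ∉ spectrum ℂ A) :
    IsUnit ((Complex.I * (ν : ℂ)) • (1 : Matrix (Fin n) (Fin n) ℂ) - A).det := by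
  rwa [spectrum.notMem_iff, Algebra.algebraMap_eq_smul_one, isUnit_iff_isUnit_det] at hν

lemma resolvMat_mul {ν : ℝ} (hν : Complex.I * ν ∉ spectrum ℂ A) :
    resolvMat A ν * A = (Complex.I * (ν : ℂ)) • resolvMat A ν - 1 := by
  have hinv : resolvMat A ν * ((Complex.I * (ν : ℂ)) • 1 - A) = 1 :=
    nonsing_inv_mul _ (isUnit_det_sub_of_notMem_spectrum hν)
  rw [Matrix.mul_sub, Matrix.mul_smul, Matrix.mul_one] at hinv
  rw [← hinv, sub_sub_cancel]

lemma conjTranspose_mul_conjTranspose_resolvMat {ν : ℝ} (hν : Complex.I * ν ∉ spectrum ℂ A) :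
    Aᴴ * (resolvMat A ν)ᴴ = (-(Complex.I * (ν : ℂ))) • (resolvMat A ν)ᴴ - 1 := by
  rw [← conjTranspose_mul, resolvMat_mul hν, conjTranspose_sub, conjTranspose_smul,
    conjTranspose_one]
  simp [Complex.conj_ofReal]

lemma lyapunov_resolvMat {ν : ℝ} (hν : Complex.I * ν ∉ spectrum ℂ A)
    (Q : Matrix (Fin n) (Fin n) ℂ) :
    Aᴴ * ((resolvMat A ν)ᴴ * Q * resolvMat A ν) + (resolvMat A ν)ᴴ * Q * resolvMat A ν * A
      + (resolvMat A ν)ᴴ * Q + Q * resolvMat A ν = 0 := by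
  rw [← Matrix.mul_assoc, ← Matrix.mul_assoc, conjTranspose_mul_conjTranspose_resolvMat hν,
    Matrix.mul_assoc _ (resolvMat A ν), resolvMat_mul hν]
  simp only [Matrix.sub_mul, Matrix.mul_sub, Matrix.smul_mul, Matrix.mul_smul, neg_smul,
    neg_mul, Matrix.one_mul, Matrix.mul_one, Matrix.mul_assoc]
  abel

lemma continuous_resolvMat (hA : ∀ ν : ℝ, Complex.I * ν ∉ spectrum ℂ A) :
    Continuous (resolvMat A) := by
  refine continuous_iff_continuousAt.mpr fun ν => ?_
  have hdet := isUnit_det_sub_of_notMem_spectrum (hA ν)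
  refine ContinuousAt.comp (g := Inv.inv) (continuousAt_matrix_inv _ ?_) ?_
  · rw [← hdet.unit_spec]
    exact NormedRing.inverse_continuousAt hdet.unit
  · exact ((continuous_const.mul Complex.continuous_ofReal).smul continuous_const).sub
      continuous_const |>.continuousAt

end Resolvent

noncomputable def flGramian {n : ℕ} (A Q : Matrix (Fin n) (Fin n) ℂ) (ω : ℝ) :
    Matrix (Fin n) (Fin n) ℂ :=
  (1 / (2 * (Real.pi : ℂ))) •
    entrywiseIntegral (fun ν => (resolvMat A ν)ᴴ * Q * resolvMat A ν) (-ω) ω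

lemma Ffl_eq_smul_entrywiseIntegral {n : ℕ} (A : Matrix (Fin n) (Fin n) ℂ) (ω : ℝ) :
    Ffl A ω = (1 / (2 * (Real.pi : ℂ))) • entrywiseIntegral (resolvMat A) (-ω) ω :=
  rfl

lemma flGramian_lyapunov {n : ℕ} {A : Matrix (Fin n) (Fin n) ℂ}
    (hA : ∀ ν : ℝ, Complex.I * ν ∉ spectrum ℂ A) (Q : Matrix (Fin n) (Fin n) ℂ) (ω : ℝ) :
    Aᴴ * flGramian A Q ω + flGramian A Q ω * A + (Ffl A ω)ᴴ * Q + Q * Ffl A ω = 0 := by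
  have hR := continuous_resolvMat hA
  have hc : star (1 / (2 * (Real.pi : ℂ))) = 1 / (2 * (Real.pi : ℂ)) := by
    simp [Complex.conj_ofReal]
  rw [flGramian, Ffl_eq_smul_entrywiseIntegral, conjTranspose_smul, hc,
    conjTranspose_entrywiseIntegral, Matrix.mul_smul, Matrix.smul_mul, Matrix.smul_mul,
    Matrix.mul_smul, ← smul_add, ← smul_add, ← smul_add, mul_entrywiseIntegral,
    entrywiseIntegral_mul, entrywiseIntegral_mul, mul_entrywiseIntegral,
    entrywiseIntegral_add, entrywiseIntegral_add, entrywiseIntegral_add]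
  · simp only [lyapunov_resolvMat (hA _)]
    ext i j
    simp [entrywiseIntegral]
  all_goals exact Continuous.intervalIntegrable_entry (by fun_prop) _ _

theorem flimited_obs_gramian_trace_general
    {n m p : ℕ} (A : Matrix (Fin n) (Fin n) ℝ)
    (B : Matrix (Fin n) (Fin m) ℝ) (C : Matrix (Fin p) (Fin n) ℝ)
    (hA : ∀ μ ∈ spectrum ℂ (A.map Complex.ofReal), μ.re < 0)
    (ω : ℝ)
    (Yω : Matrix (Fin n) (Fin n) ℂ)
    (hY : (A.map Complex.ofReal)ᵀ * Yω + Yω * A.map Complex.ofReal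
      + (Ffl (A.map Complex.ofReal) ω)ᴴ * ((C.map Complex.ofReal)ᵀ * C.map Complex.ofReal)
      + (C.map Complex.ofReal)ᵀ * C.map Complex.ofReal * Ffl (A.map Complex.ofReal) ω = 0) :
    ((B.map Complex.ofReal)ᵀ * Yω * B.map Complex.ofReal).trace
      = (Matrix.of fun i j => (1 / (2 * (Real.pi : ℂ))) *
          ∫ ν in (-ω)..ω,
            ((C.map Complex.ofReal * resolvMat (A.map Complex.ofReal) ν * B.map Complex.ofReal)ᴴ
              * (C.map Complex.ofReal * resolvMat (A.map Complex.ofReal) ν * B.map Complex.ofReal)) i j :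
          Matrix (Fin m) (Fin m) ℂ).trace := by
  have hAimag : ∀ ν : ℝ, Complex.I * ν ∉ spectrum ℂ (A.map Complex.ofReal) := fun ν hν => by
    simpa using hA _ hν
  have hGram := flGramian_lyapunov hAimag ((C.map Complex.ofReal)ᵀ * C.map Complex.ofReal) ω
  rw [conjTranspose_map_ofReal] at hGram
  have hYω := lyapunov_solution_unique hA (by rwa [add_assoc] at hY) (by rwa [add_assoc] at hGram)
  have hR := continuous_resolvMat hAimag
  rw [hYω, flGramian, Matrix.mul_smul, Matrix.smul_mul, mul_entrywiseIntegral,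
    entrywiseIntegral_mul]
  · congr 1
    ext i j
    simp only [entrywiseIntegral, Matrix.smul_apply, of_apply, smul_eq_mul, ← conjTranspose_map_ofReal,
      conjTranspose_mul, Matrix.mul_assoc]
  all_goals exact Continuous.intervalIntegrable_entry (by fun_prop) _ _

/-- if `Y_ω` solves `Aᵀ Y_ω + Y_ω A + F_ω* Cᵀ C + Cᵀ C F_ω = 0`, then
`trace(Bᵀ Y_ω B) = trace((1/2π) ∫_{-ω}^{ω} G₁*(jν) G₁(jν) dν)` for
`G₁(s) = C (sI - A)⁻¹ B`. -/
theorem flimited_obs_gramian_trace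
    {n m p : ℕ} (A : Matrix (Fin n) (Fin n) ℝ)
    (B : Matrix (Fin n) (Fin m) ℝ) (C : Matrix (Fin p) (Fin n) ℝ)
    (hA : ∀ μ ∈ spectrum ℂ (A.map Complex.ofReal), μ.re < 0)
    (ω : ℝ) (hω : 0 < ω)
    (Yω : Matrix (Fin n) (Fin n) ℂ)
    (hY : (A.map Complex.ofReal)ᵀ * Yω + Yω * A.map Complex.ofReal
      + (Ffl (A.map Complex.ofReal) ω)ᴴ * ((C.map Complex.ofReal)ᵀ * C.map Complex.ofReal)
      + (C.map Complex.ofReal)ᵀ * C.map Complex.ofReal * Ffl (A.map Complex.ofReal) ω = 0) :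
    ((B.map Complex.ofReal)ᵀ * Yω * B.map Complex.ofReal).trace
      = (Matrix.of fun i j => (1 / (2 * (Real.pi : ℂ))) *
          ∫ ν in (-ω)..ω,
            ((C.map Complex.ofReal * resolvMat (A.map Complex.ofReal) ν * B.map Complex.ofReal)ᴴ
              * (C.map Complex.ofReal * resolvMat (A.map Complex.ofReal) ν * B.map Complex.ofReal)) i j :
          Matrix (Fin m) (Fin m) ℂ).trace :=
  flimited_obs_gramian_trace_general A B C hA ω Yω hY
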